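/- Funk parabola of type 2: let y₀ ∈ (−1,1) and F = (f₀,g₀) ∈ B² with g₀ ≠ y₀. Put σ₂ = 1 − sgn(y₀−g₀)·y₀, B = −2f₀/σ₂, C = (f₀² + (y₀−g₀)² − 2|y₀−g₀|)/σ₂², E = 2|y₀−g₀|/σ₂, and for a point (x,y) set ȳ = 1 − sgn(y₀−g₀)·y. Let 𝓗 = {(x,y) ∈ ℝ² : x² + B·x·ȳ + C·ȳ² + E·ȳ = 0}. Then the set of points P = (x,y) ∈ B² with P ≠ F satisfying d_F(P,F) = ln ρ(y,y₀) equals 𝓗 ∩ B². -/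

import Mathlib

/-- The Funk distance on the open unit ball of Euclidean n-space:
`d_F(P,Q) = ln((√k − ⟨P, Q−P⟩)/(√k − ⟨Q, Q−P⟩))` with
`k = ⟨P, Q−P⟩² + (1 − ‖P‖²)‖Q−P‖²`. -/
noncomputable def funkDist {n : ℕ} (P Q : EuclideanSpace ℝ (Fin n)) : ℝ :=
  Real.log
    ((Real.sqrt ((inner ℝ P (Q - P) : ℝ) ^ 2 + (1 - ‖P‖ ^ 2) * ‖Q - P‖ ^ 2) - (inner ℝ P (Q - P) : ℝ)) /
     (Real.sqrt ((inner ℝ P (Q - P) : ℝ) ^ 2 + (1 - ‖P‖ ^ 2) * ‖Q - P‖ ^ 2) - (inner ℝ Q (Q - P) : ℝ)))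

/-- `ρ(ε,η) = (1 + sgn(ε−η)·ε)/(1 + sgn(ε−η)·η)`. -/
noncomputable def rho (ε η : ℝ) : ℝ :=
  (1 + Real.sign (ε - η) * ε) / (1 + Real.sign (ε - η) * η)

/-- The point `(a,b)` of the Euclidean plane. -/
def pt (a b : ℝ) : EuclideanSpace ℝ (Fin 2) := WithLp.toLp 2 ![a, b]

/-!
For `P ≠ F` in the disk put `a = ⟪P, F - P⟫`, `δ = ‖F - P‖²` and `k = a² + (1 - ‖P‖²) δ`.
Then `⟪F, F - P⟫ = a + δ` and `k - (a + δ)² = δ (1 - ‖F‖²) > 0`, so for `0 < v ≤ u` the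
equation `d_F(P,F) = ln(u/v)` says `√k (u - v) = δ u + a (u - v)`. Squaring and dividing by `δ`
turns it into the quadratic equation `δ u² + 2 a u (u - v) = (1 - ‖P‖²) (u - v)²`, and this is
reversible because the quadratic equation itself gives
`2 u (δ u + a (u - v)) = δ u² + (1 - ‖P‖²) (u - v)² > 0`.
Suppose the focus lies below the directrix. Below the directrix `ρ = (1 - y)/(1 - y₀)`, and the
quadratic equation for `u = 1 - y`, `v = 1 - y₀` is the paper's conic. On or above it
`ρ = (1 + y)/(1 + y₀)`, and both the conic and the quadratic equation for `u = 1 + y`,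
`v = 1 + y₀` fail: their left-hand sides are sums of a square and positive terms.
The reflection `y ↦ -y` reduces the other case to this one.
-/

open Real
open scoped InnerProductSpace

lemma norm_pt_sq (a b : ℝ) : ‖pt a b‖ ^ 2 = a ^ 2 + b ^ 2 := by
  simp [EuclideanSpace.norm_sq_eq, Fin.sum_univ_two, pt]

lemma norm_pt_lt_one_iff {a b : ℝ} : ‖pt a b‖ < 1 ↔ a ^ 2 + b ^ 2 < 1 := by
  rw [← norm_pt_sq, sq_lt_one_iff₀ (norm_nonneg _)]

lemma norm_pt_neg (a b : ℝ) : ‖pt a (-b)‖ = ‖pt a b‖ := by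
  rw [← sq_eq_sq₀ (norm_nonneg _) (norm_nonneg _), norm_pt_sq, norm_pt_sq, neg_sq]

lemma inner_pt (a b c d : ℝ) : ⟪pt a b, pt c d⟫_ℝ = a * c + b * d := by
  simp only [pt, PiLp.inner_apply, RCLike.inner_apply, Real.ringHom_apply, Fin.sum_univ_two,
    Matrix.cons_val_zero, Matrix.cons_val_one]
  ring

lemma pt_sub (a b c d : ℝ) : pt a b - pt c d = pt (a - c) (b - d) := by
  ext i
  fin_cases i <;> simp [pt]

lemma pt_inj {a b c d : ℝ} : pt a b = pt c d ↔ a = c ∧ b = d := by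
  refine ⟨fun h => ?_, by rintro ⟨rfl, rfl⟩; rfl⟩
  have h' := congrArg WithLp.ofLp h
  exact ⟨congrFun h' 0, congrFun h' 1⟩

lemma funkDist_pt_neg (x y f g : ℝ) :
    funkDist (pt x (-y)) (pt f (-g)) = funkDist (pt x y) (pt f g) := by
  simp only [funkDist, pt_sub, inner_pt, norm_pt_sq]
  ring_nf

lemma rho_neg (ε η : ℝ) : rho (-ε) (-η) = rho ε η := by
  rw [rho, rho, show -ε - -η = -(ε - η) by ring, Real.sign_neg]
  ring_nf

lemma rho_of_lt {ε η : ℝ} (h : ε < η) : rho ε η = (1 - ε) / (1 - η) := by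
  rw [rho, Real.sign_of_neg (sub_neg.2 h)]
  ring_nf

lemma rho_of_le {ε η : ℝ} (h : η ≤ ε) (hη : -1 < η) : rho ε η = (1 + ε) / (1 + η) := by
  rcases h.lt_or_eq with h | rfl
  · rw [rho, Real.sign_of_pos (sub_pos.2 h)]
    ring_nf
  · rw [rho, sub_self, Real.sign_zero, zero_mul, add_zero, div_one, div_self (by linarith)]

lemma sign_mul_self_eq_abs (r : ℝ) : Real.sign r * r = |r| := by
  rcases lt_trichotomy r 0 with h | rfl | h
  · rw [Real.sign_of_neg h, abs_of_neg h, neg_one_mul]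
  · simp
  · rw [Real.sign_of_pos h, abs_of_pos h, one_mul]

lemma sqrt_mul_eq_add_iff {a m δ u c : ℝ} (hm : 0 ≤ m) (hδ : 0 < δ) (hu : 0 < u) (hc : 0 ≤ c) :
    √(a ^ 2 + m * δ) * c = δ * u + a * c ↔ δ * u ^ 2 + 2 * a * u * c = m * c ^ 2 := by
  have hk : 0 ≤ a ^ 2 + m * δ := by positivity
  constructor
  · intro h
    have hsq : (δ * u + a * c) ^ 2 = (a ^ 2 + m * δ) * c ^ 2 := by
      rw [← h, mul_pow, sq_sqrt hk]
    exact mul_left_cancel₀ hδ.ne' (by linear_combination hsq)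
  · intro h
    have hw : 0 ≤ δ * u + a * c := by
      have h2 : 2 * u * (δ * u + a * c) = δ * u ^ 2 + m * c ^ 2 := by linear_combination h
      have h3 : 0 ≤ 2 * u * (δ * u + a * c) := by rw [h2]; positivity
      exact nonneg_of_mul_nonneg_right h3 (by linarith)
    have hsqrt : √(a ^ 2 + m * δ) * c = √((a ^ 2 + m * δ) * c ^ 2) := by
      rw [sqrt_mul hk, sqrt_sq hc]
    rw [hsqrt, sqrt_eq_iff_eq_sq (by positivity) hw]
    linear_combination (-δ) * h

lemma real_inner_sub_eq_add_norm_sq {E : Type*} [NormedAddCommGroup E] [InnerProductSpace ℝ E]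
    (x y : E) : ⟪y, y - x⟫_ℝ = ⟪x, y - x⟫_ℝ + ‖y - x‖ ^ 2 := by
  rw [← real_inner_self_eq_norm_sq, inner_sub_left]
  ring

lemma funkDist_eq_log_div_iff {n : ℕ} {P Q : EuclideanSpace ℝ (Fin n)} (hP : ‖P‖ < 1) (hQ : ‖Q‖ < 1) (hPQ : P ≠ Q) {u v : ℝ}
    (hv : 0 < v) (hvu : v ≤ u) :
    funkDist P Q = log (u / v) ↔
      ‖Q - P‖ ^ 2 * u ^ 2 + 2 * ⟪P, Q - P⟫_ℝ * u * (u - v) = (1 - ‖P‖ ^ 2) * (u - v) ^ 2 := by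
  have hb := real_inner_sub_eq_add_norm_sq P Q
  set a := ⟪P, Q - P⟫_ℝ
  set δ := ‖Q - P‖ ^ 2
  have hδ : 0 < δ := pow_pos (norm_pos_iff.2 (sub_ne_zero.2 hPQ.symm)) 2
  have hm : 0 < 1 - ‖P‖ ^ 2 := by nlinarith [norm_nonneg P]
  have hQsq : ‖Q‖ ^ 2 = ‖P‖ ^ 2 + 2 * a + δ := by
    simpa using norm_add_sq_real P (Q - P)
  set k := a ^ 2 + (1 - ‖P‖ ^ 2) * δ
  have hden : a + δ < √k := by
    refine lt_sqrt_of_sq_lt ?_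
    have hQ1 : ‖Q‖ ^ 2 < 1 := by nlinarith [norm_nonneg Q]
    have hgap : k - (a + δ) ^ 2 = δ * (1 - ‖Q‖ ^ 2) := by rw [hQsq]; ring
    linarith [mul_pos hδ (sub_pos.2 hQ1)]
  have hratio : 0 < (√k - a) / (√k - (a + δ)) := div_pos (by linarith) (by linarith)
  rw [funkDist, hb, log_injOn_pos.eq_iff hratio (div_pos (by linarith) hv),
    div_eq_div_iff (by linarith) hv.ne', ← sqrt_mul_eq_add_iff hm.le hδ (by linarith) (by linarith)]
  constructor <;> intro h <;> linarith

/-- `σ₂²` times the left-hand side of the paper's equation of `𝓗` when `g < y₀`, i.e. `s = 1`. -/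
def funkParabolaPoly (f g y₀ x y : ℝ) : ℝ :=
  (1 - y₀) ^ 2 * x ^ 2 - 2 * f * (1 - y₀) * x * (1 - y)
    + (f ^ 2 + (y₀ - g) ^ 2 - 2 * (y₀ - g)) * (1 - y) ^ 2 + 2 * (y₀ - g) * (1 - y₀) * (1 - y)

lemma funkParabolaPoly_eq (f g y₀ x y : ℝ) :
    funkParabolaPoly f g y₀ x y
      = ((f - x) ^ 2 + (g - y) ^ 2) * (1 - y) ^ 2 + 2 * (x * (f - x) + y * (g - y)) * (1 - y) * (y₀ - y)
        - (1 - (x ^ 2 + y ^ 2)) * (y₀ - y) ^ 2 := by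
  unfold funkParabolaPoly
  ring

lemma funkParabolaPoly_pos {f g y₀ x y : ℝ} (hg : g < y₀) (hy : y₀ ≤ y) (hy1 : y < 1) :
    0 < funkParabolaPoly f g y₀ x y := by
  have hsos : funkParabolaPoly f g y₀ x y = ((1 - y₀) * x - f * (1 - y)) ^ 2
      + (y₀ - g) ^ 2 * (1 - y) ^ 2 + 2 * (y₀ - g) * (1 - y) * (y - y₀) := by
    unfold funkParabolaPoly
    ring
  have hd : 0 < y₀ - g := sub_pos.2 hg
  have hy1' : 0 < 1 - y := sub_pos.2 hy1
  have hy' : 0 ≤ y - y₀ := sub_nonneg.2 hy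
  rw [hsos]
  positivity

lemma funkDist_ne_log_rho_of_le {x y f g y₀ : ℝ} (hP : ‖pt x y‖ < 1) (hF : ‖pt f g‖ < 1)
    (hg : g < y₀) (hy : y₀ ≤ y) :
    funkDist (pt x y) (pt f g) ≠ log (rho y y₀) := by
  have hg1 : -1 < g := by nlinarith [norm_pt_lt_one_iff.1 hF, sq_nonneg f]
  have hPF : pt x y ≠ pt f g := fun h => (hg.trans_le hy).ne' (pt_inj.1 h).2
  rw [ne_eq, rho_of_le hy (by linarith), funkDist_eq_log_div_iff hP hF hPF (by linarith) (by linarith),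
    pt_sub, inner_pt, norm_pt_sq, norm_pt_sq]
  have hsos : ((f - x) ^ 2 + (g - y) ^ 2) * (1 + y) ^ 2
      + 2 * (x * (f - x) + y * (g - y)) * (1 + y) * (1 + y - (1 + y₀))
      - (1 - (x ^ 2 + y ^ 2)) * (1 + y - (1 + y₀)) ^ 2
      = (x * (1 + y₀) - f * (1 + y)) ^ 2
        + (y₀ - g) * (1 + y) * ((1 - g) * (y - y₀) + (1 + y₀) * (y - g)) := by
    ring
  have hd : 0 < y₀ - g := sub_pos.2 hg
  have hy' : 0 < 1 + y := by linarith
  have h1 : 0 < (1 - g) * (y - y₀) + (1 + y₀) * (y - g) := by nlinarith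
  have h2 : 0 < (y₀ - g) * (1 + y) * ((1 - g) * (y - y₀) + (1 + y₀) * (y - g)) := by positivity
  intro h
  linarith [sq_nonneg (x * (1 + y₀) - f * (1 + y))]

lemma funkDist_eq_log_rho_iff_of_lt {x y f g y₀ : ℝ} (hP : ‖pt x y‖ < 1) (hF : ‖pt f g‖ < 1)
    (hg : g < y₀) (hy₀ : y₀ < 1) :
    (pt x y ≠ pt f g ∧ funkDist (pt x y) (pt f g) = log (rho y y₀))
      ↔ funkParabolaPoly f g y₀ x y = 0 := by
  have hP' := norm_pt_lt_one_iff.1 hP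
  rcases lt_or_ge y y₀ with hy | hy
  · have hPF : funkParabolaPoly f g y₀ x y = 0 → pt x y ≠ pt f g := by
      rintro hQ h
      obtain ⟨rfl, rfl⟩ := pt_inj.1 h
      rw [funkParabolaPoly_eq] at hQ
      nlinarith [mul_pos (sub_pos.2 hP') (pow_pos (sub_pos.2 hy) 2)]
    have hequation (hPF : pt x y ≠ pt f g) : funkDist (pt x y) (pt f g) = log (rho y y₀)
        ↔ funkParabolaPoly f g y₀ x y = 0 := by
      rw [rho_of_lt hy, funkDist_eq_log_div_iff hP hF hPF (by linarith) (by linarith),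
        funkParabolaPoly_eq, pt_sub, inner_pt, norm_pt_sq, norm_pt_sq]
      constructor <;> intro h <;> linear_combination h
    exact ⟨fun ⟨hne, h⟩ => (hequation hne).1 h, fun h => ⟨hPF h, (hequation (hPF h)).2 h⟩⟩
  · have hy1 : y < 1 := by nlinarith
    exact iff_of_false (fun h => funkDist_ne_log_rho_of_le hP hF hg hy h.2)
      (funkParabolaPoly_pos hg hy hy1).ne'

lemma funkDist_eq_log_rho_iff {x y f g y₀ s : ℝ} (hs : s = 1 ∨ s = -1) (hP : ‖pt x y‖ < 1)
    (hF : ‖pt f g‖ < 1) (hg : s * g < s * y₀) (hy₀ : s * y₀ < 1) :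
    (pt x y ≠ pt f g ∧ funkDist (pt x y) (pt f g) = log (rho y y₀))
      ↔ funkParabolaPoly f (s * g) (s * y₀) x (s * y) = 0 := by
  rcases hs with rfl | rfl
  · simp only [one_mul] at hg hy₀ ⊢
    exact funkDist_eq_log_rho_iff_of_lt hP hF hg hy₀
  · simp only [neg_one_mul] at hg hy₀ ⊢
    rw [← funkDist_eq_log_rho_iff_of_lt (by rwa [norm_pt_neg]) (by rwa [norm_pt_neg]) hg hy₀,
      funkDist_pt_neg, rho_neg, ne_eq, ne_eq, pt_inj, pt_inj, neg_inj]

/-- The (non-degenerate) type-2 Funk parabola with focus `F = (f₀,g₀)` and directrix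
`y = y₀` is the intersection with the unit disk of the Euclidean hyperbola
`x² + Bxȳ + Cȳ² + Eȳ = 0` in `x` and `ȳ = 1 − sgn(y₀−g₀)·y`. -/
theorem funk_parabola_stmt10 (y₀ f₀ g₀ s σ₂ B C E : ℝ)
    (hy₀ : -1 < y₀ ∧ y₀ < 1) (hF : ‖pt f₀ g₀‖ < 1) (hgy : g₀ ≠ y₀)
    (hs : s = Real.sign (y₀ - g₀)) (hσ : σ₂ = 1 - s * y₀)
    (hB : B = -2 * f₀ / σ₂)
    (hC : C = (f₀ ^ 2 + (y₀ - g₀) ^ 2 - 2 * |y₀ - g₀|) / σ₂ ^ 2)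
    (hE : E = 2 * |y₀ - g₀| / σ₂) :
    {p : ℝ × ℝ | ‖pt p.1 p.2‖ < 1 ∧ pt p.1 p.2 ≠ pt f₀ g₀ ∧
        funkDist (pt p.1 p.2) (pt f₀ g₀) = Real.log (rho p.2 y₀)} =
      {p : ℝ × ℝ | p.1 ^ 2 + B * p.1 * (1 - s * p.2) + C * (1 - s * p.2) ^ 2
          + E * (1 - s * p.2) = 0} ∩ {p : ℝ × ℝ | ‖pt p.1 p.2‖ < 1} := by
  obtain ⟨hy₀l, hy₀u⟩ := hy₀
  have habs : s * (y₀ - g₀) = |y₀ - g₀| := hs ▸ sign_mul_self_eq_abs _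
  have hs₁ : s = 1 ∨ s = -1 :=
    hs ▸ (Real.sign_apply_eq_of_ne_zero _ (sub_ne_zero.2 hgy.symm)).symm
  have hsg : s * g₀ < s * y₀ := by
    have := abs_pos.2 (sub_ne_zero.2 hgy.symm)
    linarith
  have hsy : s * y₀ < 1 := by rcases hs₁ with rfl | rfl <;> linarith
  have hσ₂ : σ₂ ≠ 0 := by rw [hσ]; linarith
  have hpoly (x y : ℝ) : x ^ 2 + B * x * (1 - s * y) + C * (1 - s * y) ^ 2 + E * (1 - s * y)
      = funkParabolaPoly f₀ (s * g₀) (s * y₀) x (s * y) / σ₂ ^ 2 := by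
    rw [eq_div_iff (pow_ne_zero 2 hσ₂), hB, hC, hE, ← habs, funkParabolaPoly, ← hσ]
    field_simp
    rcases hs₁ with rfl | rfl <;> ring
  ext ⟨x, y⟩
  simp only [Set.mem_ofPred_eq, Set.mem_inter_iff, hpoly, div_eq_zero_iff, pow_ne_zero 2 hσ₂,
    or_false]
  rw [and_comm (b := ‖pt x y‖ < 1)]
  exact and_congr_right fun hP => funkDist_eq_log_rho_iff hs₁ hP hF hsg hsy
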